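/- arXiv:2605.22076 — 12 statements merged into one kernel-verified Lean document; each statement's English description precedes it below -/
import Mathlib

section
/- Let (V, {T_σ}_{σ∈Σ}) be an order stable ADP with a finite nonempty policy set Σ. If every v ∈ V has at least one v-max-greedy policy, then the Bellman max-operator T_△ is well-defined on V and has at least one fixed point in V; hence the ADP is max-stable. -/
/-- `vbar` is the unique fixed point of the self-map `S`. -/
def UniqFix {V : Type*} (S : V → V) (vbar : V) : Prop :=
  S vbar = vbar ∧ ∀ v, S v = v → v = vbar

/-- Upward and downward stability of `S` with respect to the point `vbar`. -/
def OrderStablePt {V : Type*} [PartialOrder V] (S : V → V) (vbar : V) : Prop :=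
  (∀ v, v ≤ S v → v ≤ vbar) ∧ (∀ v, S v ≤ v → vbar ≤ v)

/-- The ADP `(V, {T σ})` is order stable: each policy operator `T σ` has the
unique fixed point `vf σ` (the σ-value function) and is order stable. -/
def ADPOrderStable {V 𝒮 : Type*} [PartialOrder V] (T : 𝒮 → V → V) (vf : 𝒮 → V) : Prop :=
  ∀ σ, UniqFix (T σ) (vf σ) ∧ OrderStablePt (T σ) (vf σ)

/-- `σ` is a `v`-max-greedy policy: `T τ v ≤ T σ v` for all `τ`. -/
def MaxGreedy {V 𝒮 : Type*} [PartialOrder V] (T : 𝒮 → V → V) (v : V) (σ : 𝒮) : Prop :=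
  ∀ τ, T τ v ≤ T σ v

/-- `σ` is a `v`-min-greedy policy: `T σ v ≤ T τ v` for all `τ`. -/
def MinGreedy {V 𝒮 : Type*} [PartialOrder V] (T : 𝒮 → V → V) (v : V) (σ : 𝒮) : Prop :=
  ∀ τ, T σ v ≤ T τ v

/-- `B` is the Bellman max-operator of the ADP: `B v = ⋁_σ T σ v`. -/
def IsBellmanMax {V 𝒮 : Type*} [PartialOrder V] (T : 𝒮 → V → V) (B : V → V) : Prop :=
  ∀ v, IsLUB (Set.range fun σ => T σ v) (B v)

/-- `B` is the Bellman min-operator of the ADP: `B v = ⋀_σ T σ v`. -/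
def IsBellmanMin {V 𝒮 : Type*} [PartialOrder V] (T : 𝒮 → V → V) (B : V → V) : Prop :=
  ∀ v, IsGLB (Set.range fun σ => T σ v) (B v)

/-- The ADP is max-stable: it is order stable, every `v` has a max-greedy
policy, and the Bellman max-operator `B` has at least one fixed point. -/
def MaxStable {V 𝒮 : Type*} [PartialOrder V] (T : 𝒮 → V → V) (vf : 𝒮 → V) (B : V → V) : Prop :=
  ADPOrderStable T vf ∧ (∀ v, ∃ σ, MaxGreedy T v σ) ∧ IsBellmanMax T B ∧ (∃ v, B v = v)

/-- The ADP is min-stable: it is order stable, every `v` has a min-greedy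
policy, and the Bellman min-operator `B` has at least one fixed point. -/
def MinStable {V 𝒮 : Type*} [PartialOrder V] (T : 𝒮 → V → V) (vf : 𝒮 → V) (B : V → V) : Prop :=
  ADPOrderStable T vf ∧ (∀ v, ∃ σ, MinGreedy T v σ) ∧ IsBellmanMin T B ∧ (∃ v, B v = v)

/-- `H` is a Howard max-operator: for each `v`, `H v = vf σ` for some
`v`-max-greedy policy `σ`. -/
def IsHowardMax {V 𝒮 : Type*} [PartialOrder V] (T : 𝒮 → V → V) (vf : 𝒮 → V) (H : V → V) : Prop :=
  ∀ v, ∃ σ, MaxGreedy T v σ ∧ H v = vf σ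

/-- an order stable ADP with finite nonempty policy set in which
every `v` has a max-greedy policy has a well-defined Bellman max-operator with
at least one fixed point; hence the ADP is max-stable. -/
theorem stmt_4 {V 𝒮 : Type*} [PartialOrder V] [Finite 𝒮] [Nonempty 𝒮]
    (T : 𝒮 → V → V) (hmono : ∀ σ, Monotone (T σ)) (vf : 𝒮 → V)
    (hos : ADPOrderStable T vf)
    (hgreedy : ∀ v, ∃ σ, MaxGreedy T v σ) :
    ∃ B : V → V, IsBellmanMax T B ∧ (∃ v, B v = v) ∧ MaxStable T vf B := by
  classical
  choose g hg using hgreedy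
  set B : V → V := fun v => T (g v) v with hB
  have hBellman : IsBellmanMax T B := by
    intro v
    constructor
    · rintro x ⟨τ, rfl⟩
      exact hg v τ
    · intro u hu
      exact hu ⟨g v, rfl⟩
  -- policy iteration sequence
  let σseq : ℕ → 𝒮 := fun n => Nat.rec (Classical.arbitrary 𝒮) (fun _ σ => g (vf σ)) n
  have hstep : ∀ n, σseq (n + 1) = g (vf (σseq n)) := fun n => rfl
  have hle : ∀ n, vf (σseq n) ≤ vf (σseq (n + 1)) := by
    intro n
    have hfix : T (σseq n) (vf (σseq n)) = vf (σseq n) := (hos (σseq n)).1.1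
    have h1 : vf (σseq n) ≤ T (σseq (n + 1)) (vf (σseq n)) := by
      rw [hstep]
      calc vf (σseq n) = T (σseq n) (vf (σseq n)) := hfix.symm
        _ ≤ T (g (vf (σseq n))) (vf (σseq n)) := hg _ _
    exact (hos (σseq (n + 1))).2.1 _ h1
  have hmonoseq : Monotone (fun n => vf (σseq n)) := monotone_nat_of_le_succ hle
  have hex : ∃ n, vf (σseq n) = vf (σseq (n + 1)) := by
    by_contra h
    push_neg at h
    have hsm : StrictMono (fun n => vf (σseq n)) :=
      strictMono_nat_of_lt_succ (fun n => lt_of_le_of_ne (hle n) (h n))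
    have hinj : Function.Injective (vf ∘ σseq) := hsm.injective
    have : Function.Injective σseq := fun a b hab => hinj (by simp [Function.comp, hab])
    haveI := Finite.of_injective σseq this; exact not_finite ℕ
  obtain ⟨n, hn⟩ := hex
  have hfixB : B (vf (σseq n)) = vf (σseq n) := by
    have : B (vf (σseq n)) = T (σseq (n + 1)) (vf (σseq n)) := by rw [hstep]
    rw [this, hn, (hos (σseq (n + 1))).1.1, ← hn]
  exact ⟨B, hBellman, ⟨_, hfixB⟩, hos, fun v => ⟨g v, hg v⟩, hBellman, ⟨_, hfixB⟩⟩
end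

section
/- Let (V, {T_σ}_{σ∈Σ}) be a max-stable ADP. Then the set V_Σ = {v_σ : σ ∈ Σ} of σ-value functions has a greatest element v_△, and v_△ is the unique fixed point of the Bellman max-operator T_△ in V. -/
/-- in a max-stable ADP, the set of σ-value functions has a
greatest element `vmax`, which is the unique fixed point of the Bellman
max-operator. -/
theorem stmt_5 {V 𝒮 : Type*} [PartialOrder V] [Nonempty 𝒮]
    (T : 𝒮 → V → V) (hmono : ∀ σ, Monotone (T σ)) (vf : 𝒮 → V) (B : V → V)
    (hms : MaxStable T vf B) :
    ∃ vmax, IsGreatest (Set.range vf) vmax ∧ UniqFix B vmax := by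
  obtain ⟨hos, hgreedy, hB, w, hw⟩ := hms
  -- Any fixed point of B is in range vf
  have hmem : ∀ u, B u = u → ∃ σ, vf σ = u := by
    intro u hu
    obtain ⟨σ, hσ⟩ := hgreedy u
    have hub : T σ u ∈ upperBounds (Set.range fun τ => T τ u) := by
      rintro x ⟨τ, rfl⟩; exact hσ τ
    have h1 : B u ≤ T σ u := (hB u).2 hub
    have h2 : T σ u ≤ B u := (hB u).1 ⟨σ, rfl⟩
    rw [hu] at h1 h2
    have : T σ u = u := le_antisymm h2 h1
    exact ⟨σ, ((hos σ).1.2 u this).symm⟩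
  -- Any fixed point of B is an upper bound of range vf
  have hub : ∀ u, B u = u → ∀ τ, vf τ ≤ u := by
    intro u hu τ
    have : T τ u ≤ u := by have h := (hB u).1 ⟨τ, rfl⟩; rwa [hu] at h
    exact (hos τ).2.2 u this
  refine ⟨w, ⟨(hmem w hw).imp fun σ h => h, ?_⟩, hw, ?_⟩
  · rintro x ⟨τ, rfl⟩; exact hub w hw τ
  · intro v hv
    obtain ⟨σ, rfl⟩ := hmem v hv
    obtain ⟨τ, rfl⟩ := hmem w hw
    exact le_antisymm (hub (vf τ) hw σ) (hub (vf σ) hv τ)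
end

section
/- Let (V, {T_σ}_{σ∈Σ}) be a max-stable ADP with max-value function v_△. Then a policy σ ∈ Σ is max-optimal if and only if σ is v_△-max-greedy, and at least one max-optimal policy exists. -/
/-- in a max-stable ADP with max-value function `vmax`, a policy
is max-optimal iff it is `vmax`-max-greedy, and a max-optimal policy exists. -/
theorem stmt_6 {V 𝒮 : Type*} [PartialOrder V] [Nonempty 𝒮]
    (T : 𝒮 → V → V) (hmono : ∀ σ, Monotone (T σ)) (vf : 𝒮 → V) (B : V → V)
    (hms : MaxStable T vf B)
    (vmax : V) (hmax : IsGreatest (Set.range vf) vmax) :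
    (∀ σ, vf σ = vmax ↔ MaxGreedy T vmax σ) ∧ (∃ σ, vf σ = vmax) := by
  obtain ⟨hos, hgreedy, hlub, vbar, hvbar⟩ := hms
  -- every vf σ ≤ vbar
  have hub : ∀ σ, vf σ ≤ vbar := by
    intro σ
    have h := (hlub vbar).1 ⟨σ, rfl⟩
    rw [hvbar] at h
    exact (hos σ).2.2 vbar h
  -- a greedy policy at vbar attains it
  obtain ⟨σ₀, hσ₀⟩ := hgreedy vbar
  have hTσ₀ : T σ₀ vbar = vbar := by
    have h1 : T σ₀ vbar ≤ B vbar := (hlub vbar).1 ⟨σ₀, rfl⟩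
    have h2 : B vbar ≤ T σ₀ vbar := (hlub vbar).2 (by rintro _ ⟨τ, rfl⟩; exact hσ₀ τ)
    rw [hvbar] at h1 h2
    exact le_antisymm h1 h2
  have hvfσ₀ : vf σ₀ = vbar := ((hos σ₀).1.2 vbar hTσ₀).symm
  -- vbar = vmax
  have hvm : vbar = vmax := by
    refine le_antisymm (hmax.2 ⟨σ₀, hvfσ₀⟩) ?_
    obtain ⟨τ, hτ⟩ := hmax.1
    have := hub τ
    rwa [hτ] at this
  have hBmax : B vmax = vmax := hvm ▸ hvbar
  have hlubm := hlub vmax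
  constructor
  · intro σ
    constructor
    · intro hσ τ
      have hfix : T σ vmax = vmax := by
        have := (hos σ).1.1
        rw [hσ] at this; exact this
      have h := hlubm.1 ⟨τ, rfl⟩
      rw [hBmax] at h
      rw [hfix]
      exact h
    · intro hg
      have h1 := hlubm.1 ⟨σ, rfl⟩
      have h2 := hlubm.2 (by rintro _ ⟨τ, rfl⟩; exact hg τ)
      rw [hBmax] at h1 h2
      exact ((hos σ).1.2 vmax (le_antisymm h1 h2)).symm
  · exact ⟨σ₀, hvfσ₀.trans hvm⟩
end

section
/- Let (V, {T_σ}_{σ∈Σ}) be a max-stable ADP with a finite policy set Σ, and let H_△ be a Howard max-operator (so H_△ v = v_σ for some v-max-greedy policy σ). Then for every v ∈ V there exists K ∈ ℕ such that H_△ᵏ v = v_△ for all k ≥ K, where v_△ is the max-value function. -/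
/-- in a max-stable ADP with finite policy set, Howard max-policy
iteration converges to the max-value function in finitely many steps. -/
theorem stmt_7 {V 𝒮 : Type*} [PartialOrder V] [Finite 𝒮] [Nonempty 𝒮]
    (T : 𝒮 → V → V) (hmono : ∀ σ, Monotone (T σ)) (vf : 𝒮 → V) (B : V → V)
    (hms : MaxStable T vf B)
    (H : V → V) (hH : IsHowardMax T vf H)
    (vmax : V) (hmax : IsGreatest (Set.range vf) vmax) :
    ∀ v, ∃ K : ℕ, ∀ k ≥ K, H^[k] v = vmax := by
  obtain ⟨hOS, hgreedy, hB, hBfix⟩ := hms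
  have hA : ∀ u ∈ Set.range vf, u ≤ H u ∧ H u ∈ Set.range vf := by
    rintro u ⟨τ, rfl⟩
    obtain ⟨σ, hσg, hσ⟩ := hH (vf τ)
    have hfix : T τ (vf τ) = vf τ := (hOS τ).1.1
    have h1 : vf τ ≤ T σ (vf τ) := by
      calc vf τ = T τ (vf τ) := hfix.symm
        _ ≤ T σ (vf τ) := hσg τ
    have h2 : vf τ ≤ vf σ := (hOS σ).2.1 (vf τ) h1
    exact ⟨by rw [hσ]; exact h2, by rw [hσ]; exact ⟨σ, rfl⟩⟩
  have hFixmax : ∀ u ∈ Set.range vf, H u = u → u = vmax := by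
    rintro u hu hfix
    obtain ⟨σ, hσg, hσ⟩ := hH u
    have hu' : u = vf σ := by rw [← hfix, hσ]
    have hTσ : T σ u = u := by rw [hu']; exact (hOS σ).1.1
    obtain ⟨σs, hσs⟩ := hmax.1
    have h4 : T σs u ≤ u := le_of_le_of_eq (hσg σs) hTσ
    have h3 : vf σs ≤ u := (hOS σs).2.2 u h4
    exact le_antisymm (hmax.2 hu) (by rw [← hσs]; exact h3)
  intro v
  set w : ℕ → V := fun k => H^[k+1] v with hw
  have hwr : ∀ k, w k ∈ Set.range vf := by
    intro k; induction k with
    | zero =>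
      obtain ⟨σ, _, hσ⟩ := hH v
      exact ⟨σ, by simp [hw, hσ.symm]⟩
    | succ n ih =>
      have := (hA _ ih).2
      simpa [hw, Function.iterate_succ_apply'] using this
  have hwm : Monotone w := by
    apply monotone_nat_of_le_succ
    intro k
    have := (hA _ (hwr k)).1
    simpa [hw, Function.iterate_succ_apply'] using this
  have hfin : (Set.range vf).Finite := Set.finite_range vf
  have hex : ∃ k, w (k+1) = w k := by
    by_contra h
    push_neg at h
    have hsm : StrictMono w := strictMono_nat_of_lt_succ
      (fun n => lt_of_le_of_ne (hwm (Nat.le_succ n)) (Ne.symm (h n)))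
    have hsub : Set.range w ⊆ Set.range vf := by rintro _ ⟨k, rfl⟩; exact hwr k
    exact Set.infinite_range_of_injective hsm.injective (hfin.subset hsub)
  obtain ⟨k, hk⟩ := hex
  have hHfix : H (w k) = w k := by
    simpa [hw, Function.iterate_succ_apply'] using hk
  have hvmax : w k = vmax := hFixmax _ (hwr k) hHfix
  refine ⟨k+1, ?_⟩
  intro j hj
  obtain ⟨m, rfl⟩ := Nat.exists_eq_add_of_le hj
  clear hj
  induction m with
  | zero => simpa [hw] using hvmax
  | succ n ih =>
    have hstep : H^[k+1+(n+1)] v = H (H^[k+1+n] v) := by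
      rw [show k+1+(n+1) = (k+1+n)+1 from rfl, Function.iterate_succ_apply']
    rw [hstep, ih, ← hvmax, hHfix, hvmax]
end

section
/- Let (V, {T_σ}_{σ∈Σ}) be an order stable ADP in which every v ∈ V has at least one v-max-greedy policy, and let H_△ be a Howard max-operator. Then v_σ ≤ H_△ v_σ for every σ ∈ Σ. -/
/-- in an order stable ADP in which every `v` has a max-greedy
policy, any Howard max-operator satisfies `vf σ ≤ H (vf σ)` for all `σ`. -/
theorem stmt_8 {V 𝒮 : Type*} [PartialOrder V] [Nonempty 𝒮]
    (T : 𝒮 → V → V) (hmono : ∀ σ, Monotone (T σ)) (vf : 𝒮 → V)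
    (hos : ADPOrderStable T vf)
    (hgreedy : ∀ v, ∃ σ, MaxGreedy T v σ)
    (H : V → V) (hH : IsHowardMax T vf H) :
    ∀ σ, vf σ ≤ H (vf σ) := by
  intro σ
  obtain ⟨τ, hτ, hEq⟩ := hH (vf σ)
  rw [hEq]
  have hfix : T σ (vf σ) = vf σ := (hos σ).1.1
  have h1 : vf σ ≤ T τ (vf σ) := by
    calc vf σ = T σ (vf σ) := hfix.symm
    _ ≤ T τ (vf σ) := hτ σ
  exact (hos τ).2.1 _ h1
end

section
/- Let (V, {T_σ}_{σ∈Σ}) be an order stable ADP in which every v ∈ V has at least one v-max-greedy policy, and let T_△ be the Bellman max-operator. If σ ∈ Σ satisfies T_△ v_σ = v_σ, then v_σ is the greatest element of V_Σ = {v_τ : τ ∈ Σ} (that is, the max-value function v_△ exists and equals v_σ). -/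
/-- in an order stable ADP in which every `v` has a max-greedy
policy, if `B (vf σ) = vf σ` for the Bellman max-operator `B`, then `vf σ` is
the greatest element of the set of σ-value functions. -/
theorem stmt_9 {V 𝒮 : Type*} [PartialOrder V] [Nonempty 𝒮]
    (T : 𝒮 → V → V) (hmono : ∀ σ, Monotone (T σ)) (vf : 𝒮 → V)
    (hos : ADPOrderStable T vf)
    (hgreedy : ∀ v, ∃ σ, MaxGreedy T v σ)
    (B : V → V) (hB : IsBellmanMax T B)
    (σ : 𝒮) (hfix : B (vf σ) = vf σ) :
    IsGreatest (Set.range vf) (vf σ) := by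
  constructor
  · exact ⟨σ, rfl⟩
  · rintro v ⟨τ, rfl⟩
    have h1 : T τ (vf σ) ≤ vf σ := by
      have := (hB (vf σ)).1 ⟨τ, rfl⟩
      simpa [hfix] using this
    exact (hos τ).2.2 _ h1
end

section
/- Let (V, {T_σ}_{σ∈Σ}) be an order stable ADP in which every v ∈ V has at least one v-max-greedy policy, let T_△ be the Bellman max-operator and H_△ a Howard max-operator. If v ∈ V satisfies H_△ v = v, then v is the greatest element of V_Σ = {v_σ : σ ∈ Σ} (so v = v_△) and T_△ v = v. -/
/-- in an order stable ADP in which every `v` has a max-greedy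
policy, if `H v = v` for a Howard max-operator `H`, then `v` is the greatest
element of the set of σ-value functions and is fixed by the Bellman
max-operator `B`. -/
theorem stmt_10 {V 𝒮 : Type*} [PartialOrder V] [Nonempty 𝒮]
    (T : 𝒮 → V → V) (hmono : ∀ σ, Monotone (T σ)) (vf : 𝒮 → V)
    (hos : ADPOrderStable T vf)
    (hgreedy : ∀ v, ∃ σ, MaxGreedy T v σ)
    (B : V → V) (hB : IsBellmanMax T B)
    (H : V → V) (hH : IsHowardMax T vf H)
    (v : V) (hv : H v = v) :
    IsGreatest (Set.range vf) v ∧ B v = v := by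
  obtain ⟨σ, hσg, hσv⟩ := hH v
  have hvfix : v = vf σ := hv ▸ hσv
  have hTσ : T σ v = v := by rw [hvfix]; exact (hos σ).1.1
  have hBv : B v = v := by
    have := hB v
    have h1 : v ∈ Set.range fun σ => T σ v := ⟨σ, hTσ⟩
    have h2 : ∀ w ∈ Set.range fun σ => T σ v, w ≤ v := by
      rintro w ⟨τ, rfl⟩
      exact (hσg τ).trans_eq hTσ
    exact le_antisymm (this.2 h2) (this.1 h1)
  refine ⟨⟨⟨σ, hvfix.symm⟩, ?_⟩, hBv⟩
  rintro w ⟨τ, rfl⟩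
  have hTτ : T τ v ≤ v := (hσg τ).trans_eq hTσ
  exact (hos τ).2.2 v hTτ
end

section
/- Let the ADPs (V, {T_σ}_{σ∈Σ}) and (V̂, {T̂_σ}_{σ∈Σ}) be anti-isomorphic under F. Then (V, {T_σ}) is max-stable if and only if (V̂, {T̂_σ}) is min-stable, and in this case F ∘ T_△ = T̂_▽ ∘ F on V, the value functions satisfy v̂_▽ = F v_△, and a policy σ ∈ Σ is max-optimal for (V, {T_σ}) if and only if it is min-optimal for (V̂, {T̂_σ}). -/
section Aux
variable {V Vh 𝒮 : Type*} [PartialOrder V] [PartialOrder Vh]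
variable (T : 𝒮 → V → V) (Th : 𝒮 → Vh → Vh)
variable (F : V ≃ Vh)

lemma aux_fwd
    (hF : ∀ a b : V, a ≤ b ↔ F b ≤ F a)
    (hconj : ∀ σ v, F (T σ v) = Th σ (F v))
    (vf : 𝒮 → V) (B : V → V) (h : MaxStable T vf B) :
    MinStable Th (fun σ => F (vf σ)) (fun w => F (B (F.symm w))) := by
  have hFs : ∀ a b : Vh, a ≤ b ↔ F.symm b ≤ F.symm a := by
    intro a b
    rw [hF (F.symm b) (F.symm a), Equiv.apply_symm_apply, Equiv.apply_symm_apply]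
  have hconjs : ∀ σ w, F.symm (Th σ w) = T σ (F.symm w) := by
    intro σ w
    apply F.injective
    rw [Equiv.apply_symm_apply, hconj, Equiv.apply_symm_apply]
  obtain ⟨hOS, hG, hB, v0, hv0⟩ := h
  refine ⟨?_, ?_, ?_, ?_⟩
  · intro σ
    obtain ⟨⟨hfix, huniq⟩, hup, hdown⟩ := hOS σ
    refine ⟨⟨?_, ?_⟩, ?_, ?_⟩
    · rw [← hconj, hfix]
    · intro w hw
      have h1 : T σ (F.symm w) = F.symm w := by rw [← hconjs, hw]
      have h2 := huniq _ h1
      show w = F (vf σ)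
      rw [← h2, Equiv.apply_symm_apply]
    · intro w hw
      have h1 : T σ (F.symm w) ≤ F.symm w := by
        rw [← hconjs]; exact (hFs w (Th σ w)).mp hw
      have h2 := hdown _ h1
      rw [hF] at h2
      simpa using h2
    · intro w hw
      have h1 : F.symm w ≤ T σ (F.symm w) := by
        rw [← hconjs]; exact (hFs (Th σ w) w).mp hw
      have h2 := hup _ h1
      rw [hF] at h2
      simpa using h2
  · intro w
    obtain ⟨σ, hσ⟩ := hG (F.symm w)
    refine ⟨σ, fun τ => ?_⟩
    have := (hF _ _).mp (hσ τ)
    rwa [hconj, hconj, Equiv.apply_symm_apply] at this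
  · intro w
    constructor
    · rintro x ⟨σ, rfl⟩
      have h1 : T σ (F.symm w) ≤ B (F.symm w) := (hB (F.symm w)).1 ⟨σ, rfl⟩
      have h2 := (hF _ _).mp h1
      rwa [hconj, Equiv.apply_symm_apply] at h2
    · intro c hc
      have h1 : B (F.symm w) ≤ F.symm c := by
        apply (hB (F.symm w)).2
        rintro x ⟨σ, rfl⟩
        have h2 : c ≤ Th σ w := hc ⟨σ, rfl⟩
        have h3 := (hFs _ _).mp h2
        rwa [hconjs] at h3
      have h2 := (hF _ _).mp h1
      simpa using h2
  · exact ⟨F v0, by show F (B (F.symm (F v0))) = F v0; rw [Equiv.symm_apply_apply, hv0]⟩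

lemma aux_bwd
    (hF : ∀ a b : V, a ≤ b ↔ F b ≤ F a)
    (hconj : ∀ σ v, F (T σ v) = Th σ (F v))
    (vfh : 𝒮 → Vh) (Bh : Vh → Vh) (h : MinStable Th vfh Bh) :
    MaxStable T (fun σ => F.symm (vfh σ)) (fun v => F.symm (Bh (F v))) := by
  have hFs : ∀ a b : Vh, a ≤ b ↔ F.symm b ≤ F.symm a := by
    intro a b
    rw [hF (F.symm b) (F.symm a), Equiv.apply_symm_apply, Equiv.apply_symm_apply]
  have hconjs : ∀ σ w, F.symm (Th σ w) = T σ (F.symm w) := by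
    intro σ w
    apply F.injective
    rw [Equiv.apply_symm_apply, hconj, Equiv.apply_symm_apply]
  obtain ⟨hOS, hG, hB, w0, hw0⟩ := h
  refine ⟨?_, ?_, ?_, ?_⟩
  · intro σ
    obtain ⟨⟨hfix, huniq⟩, hup, hdown⟩ := hOS σ
    refine ⟨⟨?_, ?_⟩, ?_, ?_⟩
    · rw [← hconjs, hfix]
    · intro v hv
      have h1 : Th σ (F v) = F v := by rw [← hconj, hv]
      have h2 := huniq _ h1
      show v = F.symm (vfh σ)
      rw [← h2, Equiv.symm_apply_apply]
    · intro v hv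
      have h1 : Th σ (F v) ≤ F v := by
        rw [← hconj]; exact (hF v (T σ v)).mp hv
      have h2 := hdown _ h1
      rw [hFs] at h2
      simpa using h2
    · intro v hv
      have h1 : F v ≤ Th σ (F v) := by
        rw [← hconj]; exact (hF (T σ v) v).mp hv
      have h2 := hup _ h1
      rw [hFs] at h2
      simpa using h2
  · intro v
    obtain ⟨σ, hσ⟩ := hG (F v)
    refine ⟨σ, fun τ => ?_⟩
    have := (hFs _ _).mp (hσ τ)
    rwa [hconjs, hconjs, Equiv.symm_apply_apply] at this
  · intro v
    constructor
    · rintro x ⟨σ, rfl⟩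
      have h1 : Bh (F v) ≤ Th σ (F v) := (hB (F v)).1 ⟨σ, rfl⟩
      have h2 := (hFs _ _).mp h1
      rwa [hconjs, Equiv.symm_apply_apply] at h2
    · intro c hc
      have h1 : F c ≤ Bh (F v) := by
        apply (hB (F v)).2
        rintro x ⟨σ, rfl⟩
        have h2 : T σ v ≤ c := hc ⟨σ, rfl⟩
        have h3 := (hF _ _).mp h2
        rwa [hconj] at h3
      have h2 := (hFs _ _).mp h1
      simpa using h2
  · exact ⟨F.symm w0, by show F.symm (Bh (F (F.symm w0))) = F.symm w0; rw [Equiv.apply_symm_apply, hw0]⟩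

end Aux
/-- ADPs that are anti-isomorphic under `F` (a bijection with `F`
and `F⁻¹` order-reversing) are such that one is max-stable iff the other is
min-stable; in that case `F ∘ Tmax = Tminh ∘ F`, the value functions satisfy
`vminh = F vmax`, and max-optimal policies of the first ADP coincide with
min-optimal policies of the second. -/
theorem stmt_13 {V Vh 𝒮 : Type*} [PartialOrder V] [PartialOrder Vh] [Nonempty 𝒮]
    (T : 𝒮 → V → V) (Th : 𝒮 → Vh → Vh)
    (hmono : ∀ σ, Monotone (T σ)) (hmonoh : ∀ σ, Monotone (Th σ))
    (F : V ≃ Vh) (hF : ∀ a b : V, a ≤ b ↔ F b ≤ F a)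
    (hconj : ∀ σ v, F (T σ v) = Th σ (F v)) :
    ((∃ (vf : 𝒮 → V) (B : V → V), MaxStable T vf B) ↔
      (∃ (vfh : 𝒮 → Vh) (Bh : Vh → Vh), MinStable Th vfh Bh)) ∧
    (∀ (vf : 𝒮 → V) (B : V → V) (vfh : 𝒮 → Vh) (Bh : Vh → Vh),
      MaxStable T vf B → MinStable Th vfh Bh →
      (∀ v, F (B v) = Bh (F v)) ∧
      (∀ (vmax : V) (vminh : Vh),
        IsGreatest (Set.range vf) vmax → IsLeast (Set.range vfh) vminh →
        vminh = F vmax ∧ (∀ σ, vf σ = vmax ↔ vfh σ = vminh))) := by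
  constructor
  · constructor
    · rintro ⟨vf, B, h⟩
      exact ⟨_, _, aux_fwd T Th F hF hconj vf B h⟩
    · rintro ⟨vfh, Bh, h⟩
      exact ⟨_, _, aux_bwd T Th F hF hconj vfh Bh h⟩
  · intro vf B vfh Bh hM hm
    have hvfh : ∀ σ, vfh σ = F (vf σ) := by
      intro σ
      have hfix : Th σ (F (vf σ)) = F (vf σ) := by rw [← hconj, (hM.1 σ).1.1]
      exact ((hm.1 σ).1.2 _ hfix).symm
    constructor
    · intro v
      have h1 : IsGLB (Set.range fun σ => Th σ (F v)) (F (B v)) := by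
        have := (aux_fwd T Th F hF hconj vf B hM).2.2.1 (F v)
        simpa using this
      exact h1.unique (hm.2.2.1 (F v))
    · intro vmax vminh hmax hmin
      have hkey : vminh = F vmax := by
        refine hmin.unique ⟨?_, ?_⟩
        · obtain ⟨σ0, hσ0⟩ := hmax.1
          exact ⟨σ0, by rw [hvfh, hσ0]⟩
        · rintro x ⟨σ, rfl⟩
          rw [hvfh]
          exact (hF _ _).mp (hmax.2 ⟨σ, rfl⟩)
      refine ⟨hkey, fun σ => ?_⟩
      rw [hvfh, hkey]
      exact ⟨fun h => by rw [h], fun h => F.injective h⟩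
end

section
/- Let (V, {T_σ}_{σ∈Σ}) be a min-stable ADP. Then: (i) the set V_Σ = {v_σ : σ ∈ Σ} has a least element v_▽; (ii) v_▽ is the unique fixed point of the Bellman min-operator T_▽ in V; (iii) a policy is min-optimal if and only if it is v_▽-min-greedy; and (iv) at least one min-optimal policy exists. -/
/-- in a min-stable ADP, the set of σ-value functions has a least
element `vmin`, which is the unique fixed point of the Bellman min-operator;
a policy is min-optimal iff it is `vmin`-min-greedy, and a min-optimal policy
exists. -/
theorem stmt_15 {V 𝒮 : Type*} [PartialOrder V] [Nonempty 𝒮]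
    (T : 𝒮 → V → V) (hmono : ∀ σ, Monotone (T σ)) (vf : 𝒮 → V) (B : V → V)
    (hms : MinStable T vf B) :
    ∃ vmin, IsLeast (Set.range vf) vmin ∧ UniqFix B vmin ∧
      (∀ σ, vf σ = vmin ↔ MinGreedy T vmin σ) ∧ (∃ σ, vf σ = vmin) := by
  obtain ⟨hord, hgreedy, hB, v, hv⟩ := hms
  -- if σ is v-min-greedy then B v = T σ v
  have hBg : ∀ w σ, MinGreedy T w σ → B w = T σ w := by
    intro w σ hg
    refine (hB w).unique ⟨?_, fun b hb => hb ⟨σ, rfl⟩⟩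
    rintro x ⟨τ, rfl⟩
    exact hg τ
  -- v is a fixed point of any greedy operator, hence v = vf σ for that σ
  have hfix : ∀ w, B w = w → ∃ σ, vf σ = w := by
    intro w hw
    obtain ⟨σ, hσ⟩ := hgreedy w
    have : T σ w = w := by rw [← hBg w σ hσ, hw]
    exact ⟨σ, ((hord σ).1.2 w this).symm⟩
  -- any fixed point of B is a lower bound of range vf
  have hlb : ∀ w, B w = w → ∀ τ, w ≤ vf τ := by
    intro w hw τ
    have h1 : B w ≤ T τ w := (hB w).1 ⟨τ, rfl⟩
    rw [hw] at h1
    exact ((hord τ).2.1 w h1)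
  have hleast : IsLeast (Set.range vf) v := by
    constructor
    · obtain ⟨σ, hσ⟩ := hfix v hv; exact ⟨σ, hσ⟩
    · rintro x ⟨τ, rfl⟩; exact hlb v hv τ
  refine ⟨v, hleast, ⟨hv, ?_⟩, ?_, hfix v hv⟩
  · intro w hw
    have h1 : w ≤ v := by
      obtain ⟨σ, hσ⟩ := hfix v hv
      exact hσ ▸ hlb w hw σ
    have h2 : v ≤ w := by
      obtain ⟨σ, hσ⟩ := hfix w hw
      exact hσ ▸ hleast.2 ⟨σ, rfl⟩
    exact le_antisymm h1 h2
  · intro σ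
    constructor
    · intro hσ τ
      have hT : T σ v = v := by
        conv_rhs => rw [← hσ]
        rw [← hσ, (hord σ).1.1]
      have h := (hB v).1 (Set.mem_range_self τ)
      rw [hv] at h
      rw [hT]; exact h
    · intro hg
      have : T σ v = v := by rw [← hBg v σ hg, hv]
      exact ((hord σ).1.2 v this).symm
end

section
/- Let X be a finite nonempty type, let r : X → ℝ be strictly positive, let β : X → ℝ be nonnegative, let P : X → X → ℝ be a stochastic kernel (P x x' ≥ 0 and Σ_{x'} P x x' = 1 for each x), and let α, γ be nonzero reals with θ = γ/α. For strictly positive v : X → ℝ define (T v)(x) = ( r(x)^α + β(x) · (Σ_{x'} v(x')^γ P x x')^{α/γ} )^{1/α} and (T̂ v)(x) = ( r(x)^α + β(x) · (Σ_{x'} v(x') P x x')^{1/θ} )^{θ}, and let F v = v^γ (pointwise power). Then F maps strictly positive functions bijectively to strictly positive functions and F(T v) = T̂(F v) for every strictly positive v; moreover F is order-preserving on strictly positive functions (with the pointwise order) when γ > 0 and order-reversing when γ < 0. -/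
open Finset

/-- the Epstein–Zin policy operator `T` and its transformed
version `Th` are conjugate under `F v = v ^ γ` on the strictly positive
functions; `F` is a bijection of the strictly positive functions,
order-preserving when `γ > 0` and order-reversing when `γ < 0`. -/
theorem stmt_16 {X : Type*} [Fintype X] [Nonempty X]
    (r β : X → ℝ) (P : X → X → ℝ)
    (hr : ∀ x, 0 < r x) (hβ : ∀ x, 0 ≤ β x)
    (hP : ∀ x x', 0 ≤ P x x') (hPsum : ∀ x, ∑ x', P x x' = 1)
    (α γ θ : ℝ) (hα : α ≠ 0) (hγ : γ ≠ 0) (hθ : θ = γ / α)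
    (T Th F : (X → ℝ) → (X → ℝ))
    (hT : ∀ v x, T v x =
      (r x ^ α + β x * (∑ x', v x' ^ γ * P x x') ^ (α / γ)) ^ (1 / α))
    (hTh : ∀ v x, Th v x =
      (r x ^ α + β x * (∑ x', v x' * P x x') ^ (1 / θ)) ^ θ)
    (hF : ∀ v x, F v x = v x ^ γ) :
    Set.BijOn F {v | ∀ x, 0 < v x} {v | ∀ x, 0 < v x} ∧
    (∀ v : X → ℝ, (∀ x, 0 < v x) → F (T v) = Th (F v)) ∧
    (0 < γ → ∀ v w : X → ℝ, (∀ x, 0 < v x) → (∀ x, 0 < w x) →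
      v ≤ w → F v ≤ F w) ∧
    (γ < 0 → ∀ v w : X → ℝ, (∀ x, 0 < v x) → (∀ x, 0 < w x) →
      v ≤ w → F w ≤ F v) := by
  have hθγ : θ ≠ 0 := by
    rw [hθ]; exact div_ne_zero hγ hα
  refine ⟨⟨?_, ?_, ?_⟩, ?_, ?_, ?_⟩
  · -- maps to
    intro v hv x
    rw [hF]
    exact Real.rpow_pos_of_pos (hv x) γ
  · -- injective
    intro v hv w hw hvw
    funext x
    have h : v x ^ γ = w x ^ γ := by
      have := congrFun hvw x
      rwa [hF, hF] at this
    have h2 : (v x ^ γ) ^ (1/γ) = (w x ^ γ) ^ (1/γ) := by rw [h]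
    rwa [← Real.rpow_mul (hv x).le, ← Real.rpow_mul (hw x).le,
      mul_one_div, div_self hγ, Real.rpow_one, Real.rpow_one] at h2
  · -- surjective
    intro w hw
    refine ⟨fun x => w x ^ (1/γ), fun x => Real.rpow_pos_of_pos (hw x) _, ?_⟩
    funext x
    rw [hF, ← Real.rpow_mul (hw x).le, one_div_mul_cancel hγ, Real.rpow_one]
  · -- conjugacy
    intro v hv
    funext x
    have hS : (0:ℝ) ≤ ∑ x', v x' ^ γ * P x x' :=
      Finset.sum_nonneg fun x' _ =>
        mul_nonneg (Real.rpow_pos_of_pos (hv x') γ).le (hP x x')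
    have hA : (0:ℝ) ≤ r x ^ α + β x * (∑ x', v x' ^ γ * P x x') ^ (α / γ) :=
      add_nonneg (Real.rpow_pos_of_pos (hr x) α).le
        (mul_nonneg (hβ x) (Real.rpow_nonneg hS _))
    have h1θ : 1 / θ = α / γ := by rw [hθ, one_div_div]
    rw [hF, hT, hTh, ← Real.rpow_mul hA, one_div_mul_eq_div, ← hθ, h1θ]
    simp only [hF]
  · -- order preserving
    intro hγpos v w hv hw hvw x
    simp only [hF]
    exact Real.rpow_le_rpow (hv x).le (hvw x) hγpos.le
  · -- order reversing
    intro hγneg v w hv hw hvw x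
    simp only [hF]
    exact Real.rpow_le_rpow_of_nonpos (hv x) (hvw x) hγneg.le
end

section
/- Let X be a finite nonempty type, let r : X → ℝ be strictly positive, let P : X → X → ℝ be a stochastic kernel (P x x' ≥ 0 and Σ_{x'} P x x' = 1 for each x), let ν ≠ 0 and β ∈ [0,1). For w : X → ℝ define the risk-sensitive operator (T w)(x) = log r(x) + (β/ν) · log( Σ_{x'} exp(ν · w(x')) · P x x' ), and for strictly positive v : X → ℝ define the multiplicative Kreps–Porteus operator (M v)(x) = r(x) · ( Σ_{x'} v(x')^ν · P x x' )^{β/ν}. Then for every strictly positive v : X → ℝ and every x ∈ X, exp( (T (log ∘ v))(x) ) = (M v)(x); that is, with F v = log ∘ v, we have F ∘ M = T ∘ F on strictly positive functions, and F is an order isomorphism from the strictly positive functions on X (pointwise order) onto ℝ^X (pointwise order). -/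
open Finset

/-- the multiplicative Kreps–Porteus policy operator `M` and the
risk-sensitive policy operator `T` are conjugate under the pointwise logarithm,
which is an order isomorphism from the strictly positive functions on `X` onto
`X → ℝ`. -/
theorem stmt_17 {X : Type*} [Fintype X] [Nonempty X]
    (r : X → ℝ) (P : X → X → ℝ) (hr : ∀ x, 0 < r x)
    (hP : ∀ x x', 0 ≤ P x x') (hPsum : ∀ x, ∑ x', P x x' = 1)
    (ν β : ℝ) (hν : ν ≠ 0) (hβ0 : 0 ≤ β) (hβ1 : β < 1)
    (T M : (X → ℝ) → (X → ℝ))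
    (hT : ∀ w x, T w x =
      Real.log (r x) + (β / ν) * Real.log (∑ x', Real.exp (ν * w x') * P x x'))
    (hM : ∀ v x, M v x = r x * (∑ x', v x' ^ ν * P x x') ^ (β / ν)) :
    (∀ v : X → ℝ, (∀ x, 0 < v x) →
      ∀ x, Real.exp (T (fun x' => Real.log (v x')) x) = M v x) ∧
    (∀ v : X → ℝ, (∀ x, 0 < v x) →
      (fun x => Real.log (M v x)) = T fun x' => Real.log (v x')) ∧
    Set.BijOn (fun (v : X → ℝ) x => Real.log (v x)) {v | ∀ x, 0 < v x} Set.univ ∧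
    (∀ v w : X → ℝ, (∀ x, 0 < v x) → (∀ x, 0 < w x) →
      (v ≤ w ↔ (fun x => Real.log (v x)) ≤ fun x => Real.log (w x))) := by
  have hSpos : ∀ (v : X → ℝ), (∀ x, 0 < v x) → ∀ x,
      0 < ∑ x', v x' ^ ν * P x x' := by
    intro v hv x
    have hnz : ∃ x' ∈ univ, 0 < P x x' := by
      by_contra h
      push_neg at h
      have : ∑ x', P x x' = 0 := Finset.sum_eq_zero fun x' hx' =>
        le_antisymm (h x' hx') (hP x x')
      rw [hPsum x] at this; norm_num at this
    obtain ⟨x', _, hx'⟩ := hnz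
    refine Finset.sum_pos' (fun i _ => mul_nonneg (Real.rpow_nonneg (hv i).le _) (hP x i)) ?_
    exact ⟨x', Finset.mem_univ x', mul_pos (Real.rpow_pos_of_pos (hv x') ν) hx'⟩
  have key : ∀ (v : X → ℝ), (∀ x, 0 < v x) →
      ∀ x, Real.exp (T (fun x' => Real.log (v x')) x) = M v x := by
    intro v hv x
    rw [hT, hM]
    have hsum : (∑ x', Real.exp (ν * Real.log (v x')) * P x x')
        = ∑ x', v x' ^ ν * P x x' := by
      refine Finset.sum_congr rfl fun x' _ => ?_
      rw [Real.rpow_def_of_pos (hv x'), mul_comm (Real.log (v x'))]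
    rw [hsum, Real.exp_add, Real.exp_log (hr x),
      Real.rpow_def_of_pos (hSpos v hv x), mul_comm (Real.log _)]
  refine ⟨key, ?_, ?_, ?_⟩
  · intro v hv
    funext x
    rw [← key v hv x, Real.log_exp]
  · refine ⟨fun v _ => Set.mem_univ _, ?_, ?_⟩
    · intro v hv w hw h
      funext x
      have := congrFun h x
      simpa using Real.log_injOn_pos (Set.mem_Ioi.2 (hv x)) (Set.mem_Ioi.2 (hw x)) this
    · intro w _
      refine ⟨fun x => Real.exp (w x), fun x => Real.exp_pos _, ?_⟩
      funext x; simp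
  · intro v w hv hw
    constructor
    · intro h x
      exact Real.log_le_log (hv x) (h x)
    · intro h x
      exact (Real.log_le_log_iff (hv x) (hw x)).1 (h x)
end

section
/- Let X be a finite nonempty type, let β ∈ (0,1), let r : X → ℝ, and let P be an X × X stochastic matrix (entries nonnegative, each row sums to 1). Define T : (X → ℝ) → (X → ℝ) by T v = r + β · (P v) (acting on v as a column vector). Then the matrix I − β P is invertible, v* := (I − β P)⁻¹ r is the unique fixed point of T, and T is order stable for the pointwise order: for every v : X → ℝ, if v ≤ T v then v ≤ v*, and if T v ≤ v then v* ≤ v. -/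
open Finset

lemma stmt19_key {X : Type*} [Fintype X] [Nonempty X]
    (β : ℝ) (hβ0 : 0 < β) (hβ1 : β < 1)
    (P : Matrix X X ℝ) (hP : ∀ x x', 0 ≤ P x x') (hPsum : ∀ x, ∑ x', P x x' = 1)
    (w : X → ℝ) (h : ∀ x, 0 ≤ w x - β * P.mulVec w x) : ∀ x, 0 ≤ w x := by
  obtain ⟨x0, -, hx0⟩ := Finset.exists_min_image Finset.univ w
    ⟨Classical.arbitrary X, Finset.mem_univ _⟩
  have hPw : w x0 ≤ P.mulVec w x0 := by
    have h1 : ∑ x', P x0 x' * w x0 ≤ ∑ x', P x0 x' * w x' :=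
      Finset.sum_le_sum fun x' _ =>
        mul_le_mul_of_nonneg_left (hx0 x' (Finset.mem_univ _)) (hP x0 x')
    calc w x0 = ∑ x', P x0 x' * w x0 := by rw [← Finset.sum_mul, hPsum, one_mul]
      _ ≤ ∑ x', P x0 x' * w x' := h1
      _ = P.mulVec w x0 := by simp [Matrix.mulVec, dotProduct]
  have h0 := h x0
  have hw0 : 0 ≤ w x0 := by nlinarith
  intro x
  exact le_trans hw0 (hx0 x (Finset.mem_univ _))

/-- for the MDP policy operator `T v = r + β • P v` with
`β ∈ (0,1)` and `P` a stochastic matrix, the matrix `I - β P` is invertible,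
`v* = (I - β P)⁻¹ r` is the unique fixed point of `T`, and `T` is order stable
for the pointwise order. -/
theorem stmt_19 {X : Type*} [Fintype X] [Nonempty X] [DecidableEq X]
    (β : ℝ) (hβ0 : 0 < β) (hβ1 : β < 1)
    (r : X → ℝ) (P : Matrix X X ℝ)
    (hP : ∀ x x', 0 ≤ P x x') (hPsum : ∀ x, ∑ x', P x x' = 1)
    (T : (X → ℝ) → (X → ℝ)) (hT : ∀ v, T v = r + β • P.mulVec v) :
    IsUnit (1 - β • P) ∧
    T ((1 - β • P)⁻¹.mulVec r) = (1 - β • P)⁻¹.mulVec r ∧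
    (∀ v, T v = v → v = (1 - β • P)⁻¹.mulVec r) ∧
    (∀ v, v ≤ T v → v ≤ (1 - β • P)⁻¹.mulVec r) ∧
    (∀ v, T v ≤ v → (1 - β • P)⁻¹.mulVec r ≤ v) := by
  set A : Matrix X X ℝ := 1 - β • P with hA
  have hAapp : ∀ (v : X → ℝ) (x : X), A.mulVec v x = v x - β * P.mulVec v x := by
    intro v x
    simp [hA, Matrix.sub_mulVec, Matrix.one_mulVec, Matrix.smul_mulVec]
  have hker : ∀ v : X → ℝ, A.mulVec v = 0 → v = 0 := by
    intro v hv
    have hv' : ∀ x, v x - β * P.mulVec v x = 0 := by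
      intro x; have := congrFun hv x; rwa [hAapp] at this
    have h1 : ∀ x, 0 ≤ v x :=
      stmt19_key β hβ0 hβ1 P hP hPsum v (fun x => (hv' x).ge)
    have h2 : ∀ x, 0 ≤ -v x := by
      have := stmt19_key β hβ0 hβ1 P hP hPsum (-v) (fun x => by
        have := hv' x
        simp only [Matrix.mulVec_neg, Pi.neg_apply]
        nlinarith)
      simpa using this
    funext x
    have := h1 x; have := h2 x
    simp only [Pi.zero_apply]; linarith
  have hdet : A.det ≠ 0 := by
    intro hd
    obtain ⟨v, hv0, hv⟩ := (Matrix.exists_mulVec_eq_zero_iff).mpr hd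
    exact hv0 (hker v hv)
  have hunit : IsUnit A := (Matrix.isUnit_iff_isUnit_det A).mpr (isUnit_iff_ne_zero.mpr hdet)
  set w : X → ℝ := A⁻¹.mulVec r with hw
  have hAw : A.mulVec w = r := by
    rw [hw, Matrix.mulVec_mulVec, Matrix.mul_nonsing_inv _ (isUnit_iff_ne_zero.mpr hdet), Matrix.one_mulVec]
  have hfix : T w = w := by
    rw [hT]
    funext x
    have := congrFun hAw x
    rw [hAapp] at this
    simp only [Pi.add_apply, Pi.smul_apply, smul_eq_mul]
    linarith
  refine ⟨hunit, hfix, ?_, ?_, ?_⟩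
  · intro v hv
    have hAv : A.mulVec v = r := by
      funext x
      rw [hAapp]
      have := congrFun hv x
      rw [hT] at this
      simp only [Pi.add_apply, Pi.smul_apply, smul_eq_mul] at this
      linarith
    calc v = (1 : Matrix X X ℝ).mulVec v := by rw [Matrix.one_mulVec]
      _ = (A⁻¹ * A).mulVec v := by rw [Matrix.nonsing_inv_mul _ (isUnit_iff_ne_zero.mpr hdet)]
      _ = A⁻¹.mulVec (A.mulVec v) := by rw [Matrix.mulVec_mulVec]
      _ = A⁻¹.mulVec r := by rw [hAv]
  · intro v hv
    have key := stmt19_key β hβ0 hβ1 P hP hPsum (w - v) (fun x => by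
      have h1 : v x ≤ r x + β * P.mulVec v x := by
        have := hv x
        rw [hT] at this
        simpa using this
      have h2 := congrFun hAw x
      rw [hAapp] at h2
      simp only [Pi.sub_apply, Matrix.mulVec_sub]
      linarith)
    intro x
    have := key x
    simp only [Pi.sub_apply] at this
    linarith
  · intro v hv
    have key := stmt19_key β hβ0 hβ1 P hP hPsum (v - w) (fun x => by
      have h1 : r x + β * P.mulVec v x ≤ v x := by
        have := hv x
        rw [hT] at this
        simpa using this
      have h2 := congrFun hAw x
      rw [hAapp] at h2
      simp only [Pi.sub_apply, Matrix.mulVec_sub]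
      linarith)
    intro x
    have := key x
    simp only [Pi.sub_apply] at this
    linarith
end
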